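/- arXiv:2102.05754 — 5 statements merged into one kernel-verified Lean document; each statement's English description precedes it below -/
import Mathlib

section
/- For the nested logit generating function with μ_l ≥ 1, the mixed second partial derivatives are nonpositive: ∂²G/(∂Y_j ∂Y_k)(Y) ≤ 0 for all j ≠ k and all Y in the positive orthant. -/
/-!
Each nest contributes `S ^ (1 / μ)` with `S = ∑_{i ∈ nest} Y_i ^ μ`, whose first partial in `Y_j`
is `S ^ (1 / μ - 1) * Y_j ^ (μ - 1)` for `j` in the nest. Differentiating once more in `Y_k`,
`k ≠ j`, only the factor `S ^ (1 / μ - 1)` moves, and it does so against `∂S/∂Y_k ≥ 0` with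
coefficient `1 / μ - 1 ≤ 0`.
-/

open Finset

namespace NestedLogit

variable {ι : Type*} (s : Finset ι) (p : ℝ)

noncomputable def powerSum (W : ι → ℝ) : ℝ := ∑ i ∈ s, W i ^ p

noncomputable def powerSumFDeriv (Z : ι → ℝ) : (ι → ℝ) →L[ℝ] ℝ :=
  ∑ i ∈ s, (p * Z i ^ (p - 1)) • ContinuousLinearMap.proj i

variable {s p}

theorem powerSum_nonneg {Z : ι → ℝ} (hZ : ∀ i, 0 < Z i) : 0 ≤ powerSum s p Z :=
  sum_nonneg fun i _ => Real.rpow_nonneg (hZ i).le _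

theorem powerSum_pos (hs : s.Nonempty) {Z : ι → ℝ} (hZ : ∀ i, 0 < Z i) : 0 < powerSum s p Z :=
  sum_pos (fun i _ => Real.rpow_pos_of_pos (hZ i) _) hs

section Differentiability

variable [Fintype ι]

theorem hasFDerivAt_apply_rpow (i : ι) (q : ℝ) {Z : ι → ℝ} (hZ : Z i ≠ 0) :
    HasFDerivAt (fun W : ι → ℝ => W i ^ q)
      ((q * Z i ^ (q - 1)) • (ContinuousLinearMap.proj i : (ι → ℝ) →L[ℝ] ℝ)) Z :=
  (Real.hasDerivAt_rpow_const (Or.inl hZ)).comp_hasFDerivAt (f := fun W : ι → ℝ => W i) Z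
    (hasFDerivAt_apply i Z)

theorem hasFDerivAt_powerSum {Z : ι → ℝ} (hZ : ∀ i, 0 < Z i) :
    HasFDerivAt (powerSum s p) (powerSumFDeriv s p Z) Z :=
  HasFDerivAt.fun_sum fun i _ => hasFDerivAt_apply_rpow i p (hZ i).ne'

theorem hasFDerivAt_powerSum_rpow (q : ℝ) (hs : s.Nonempty) {Z : ι → ℝ} (hZ : ∀ i, 0 < Z i) :
    HasFDerivAt (fun W => powerSum s p W ^ q)
      ((q * powerSum s p Z ^ (q - 1)) • powerSumFDeriv s p Z) Z :=
  (Real.hasDerivAt_rpow_const (Or.inl (powerSum_pos hs hZ).ne')).comp_hasFDerivAt Z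
    (hasFDerivAt_powerSum hZ)

end Differentiability

section Partials

variable [DecidableEq ι]

theorem powerSumFDeriv_single (Z : ι → ℝ) (k : ι) :
    powerSumFDeriv s p Z (Pi.single k 1) = if k ∈ s then p * Z k ^ (p - 1) else 0 := by
  simp [powerSumFDeriv, Pi.single_apply]

theorem powerSumFDeriv_single_nonneg (hp : 0 ≤ p) {Z : ι → ℝ} (hZ : ∀ i, 0 < Z i) (k : ι) :
    0 ≤ powerSumFDeriv s p Z (Pi.single k 1) := by
  rw [powerSumFDeriv_single]
  split_ifs
  exacts [mul_nonneg hp (Real.rpow_nonneg (hZ k).le _), le_rfl]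

variable (s p) in
/-- The partial derivative in `Z j` of `powerSum s p Z ^ (1 / p)`. -/
noncomputable def nestPartial (j : ι) (Z : ι → ℝ) : ℝ :=
  if j ∈ s then powerSum s p Z ^ (1 / p - 1) * Z j ^ (p - 1) else 0

variable (s p) in
noncomputable def nestPartialFDeriv (j : ι) (Y : ι → ℝ) : (ι → ℝ) →L[ℝ] ℝ :=
  if j ∈ s then
    powerSum s p Y ^ (1 / p - 1) • ((p - 1) * Y j ^ (p - 1 - 1)) • ContinuousLinearMap.proj j
      + Y j ^ (p - 1) • ((1 / p - 1) * powerSum s p Y ^ (1 / p - 1 - 1)) • powerSumFDeriv s p Y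
  else 0

theorem powerSum_rpow_fderiv_single (hp : p ≠ 0) (Z : ι → ℝ) (j : ι) :
    ((1 / p * powerSum s p Z ^ (1 / p - 1)) • powerSumFDeriv s p Z) (Pi.single j 1)
      = nestPartial s p j Z := by
  rw [smul_apply, powerSumFDeriv_single, nestPartial, smul_eq_mul]
  split_ifs
  · field_simp
  · simp

theorem nestPartialFDeriv_single_nonpos (hp : 1 ≤ p) {Y : ι → ℝ} (hY : ∀ i, 0 < Y i) {j k : ι}
    (hjk : j ≠ k) : nestPartialFDeriv s p j Y (Pi.single k 1) ≤ 0 := by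
  unfold nestPartialFDeriv
  split_ifs
  · have hcoef : 1 / p - 1 ≤ 0 := by
      rw [sub_nonpos, div_le_one (by linarith)]
      exact hp
    simp only [add_apply, smul_apply,
      ContinuousLinearMap.proj_apply, Pi.single_eq_of_ne hjk, smul_eq_mul, mul_zero, zero_add]
    exact mul_nonpos_of_nonneg_of_nonpos (Real.rpow_nonneg (hY j).le _)
      (mul_nonpos_of_nonpos_of_nonneg
        (mul_nonpos_of_nonpos_of_nonneg hcoef (Real.rpow_nonneg (powerSum_nonneg hY) _))
        (powerSumFDeriv_single_nonneg (by linarith) hY k))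
  · simp

variable [Fintype ι]

theorem hasFDerivAt_nestPartial (hs : s.Nonempty) {Y : ι → ℝ} (hY : ∀ i, 0 < Y i) (j : ι) :
    HasFDerivAt (nestPartial s p j) (nestPartialFDeriv s p j Y) Y := by
  unfold nestPartial nestPartialFDeriv
  split_ifs
  · exact (hasFDerivAt_powerSum_rpow _ hs hY).mul (hasFDerivAt_apply_rpow j _ (hY j).ne')
  · exact hasFDerivAt_const 0 Y

variable {κ : Type*} [Fintype κ] {n : κ → Finset ι} {μ : κ → ℝ}

variable (n μ) in
noncomputable def generatingFunction (W : ι → ℝ) : ℝ :=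
  ∑ l, powerSum (n l) (μ l) W ^ (1 / μ l)

theorem fderiv_generatingFunction_single (hμ : ∀ l, μ l ≠ 0) (hn : ∀ l, (n l).Nonempty)
    {Z : ι → ℝ} (hZ : ∀ i, 0 < Z i) (j : ι) :
    fderiv ℝ (generatingFunction n μ) Z (Pi.single j 1) = ∑ l, nestPartial (n l) (μ l) j Z := by
  unfold generatingFunction
  rw [(HasFDerivAt.fun_sum fun l _ => hasFDerivAt_powerSum_rpow (1 / μ l) (hn l) hZ).fderiv,
    _root_.sum_apply]
  exact sum_congr rfl fun l _ => powerSum_rpow_fderiv_single (hμ l) Z j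

theorem fderiv_sum_nestPartial_single_nonpos (hμ : ∀ l, 1 ≤ μ l) (hn : ∀ l, (n l).Nonempty)
    {Y : ι → ℝ} (hY : ∀ i, 0 < Y i) {j k : ι} (hjk : j ≠ k) :
    fderiv ℝ (fun Z => ∑ l, nestPartial (n l) (μ l) j Z) Y (Pi.single k 1) ≤ 0 := by
  rw [(HasFDerivAt.fun_sum fun l _ => hasFDerivAt_nestPartial (hn l) hY j).fderiv,
    _root_.sum_apply]
  exact sum_nonpos fun l _ => nestPartialFDeriv_single_nonpos (hμ l) hY hjk

end Partials

end NestedLogit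

open NestedLogit Filter Topology

theorem nested_logit_mixed_second_partial_nonpos_general (m L : ℕ)
    (n : Fin L → Finset (Fin m)) (μ : Fin L → ℝ) (hμ : ∀ l, 1 ≤ μ l)
    (hne : ∀ l, (n l).Nonempty) :
    ∀ Y : Fin m → ℝ, (∀ j, 0 < Y j) → ∀ j k : Fin m, j ≠ k →
      fderiv ℝ
        (fun Z : Fin m → ℝ =>
          fderiv ℝ
            (fun W : Fin m → ℝ =>
              ∑ l : Fin L, (∑ i ∈ n l, (W i) ^ μ l) ^ (1 / μ l))
            Z (Pi.single j 1))
        Y (Pi.single k 1) ≤ 0 := by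
  intro Y hY j k hjk
  have hpos : ∀ᶠ Z in 𝓝 Y, ∀ i, 0 < Z i :=
    eventually_all.2 fun i => ((continuous_apply i).tendsto Y).eventually (lt_mem_nhds (hY i))
  have hfirst : (fun Z => fderiv ℝ (generatingFunction n μ) Z (Pi.single j 1))
      =ᶠ[𝓝 Y] fun Z => ∑ l, nestPartial (n l) (μ l) j Z :=
    hpos.mono fun Z hZ =>
      fderiv_generatingFunction_single (fun l => (zero_lt_one.trans_le (hμ l)).ne') hne hZ j
  change fderiv ℝ (fun Z => fderiv ℝ (generatingFunction n μ) Z (Pi.single j 1)) Y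
    (Pi.single k 1) ≤ 0
  rw [hfirst.fderiv_eq]
  exact fderiv_sum_nestPartial_single_nonpos hμ hne hY hjk

/-- For the nested logit generating function with `μ l ≥ 1`, the mixed second
partial derivatives are nonpositive on the positive orthant. -/
theorem nested_logit_mixed_second_partial_nonpos (m L : ℕ)
    (n : Fin L → Finset (Fin m)) (μ : Fin L → ℝ) (hμ : ∀ l, 1 ≤ μ l)
    (hne : ∀ l, (n l).Nonempty)
    (hdisj : ∀ l l', l ≠ l' → Disjoint (n l) (n l'))
    (hcover : ∀ j : Fin m, ∃ l, j ∈ n l) :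
    ∀ Y : Fin m → ℝ, (∀ j, 0 < Y j) → ∀ j k : Fin m, j ≠ k →
      fderiv ℝ
        (fun Z : Fin m → ℝ =>
          fderiv ℝ
            (fun W : Fin m → ℝ =>
              ∑ l : Fin L, (∑ i ∈ n l, (W i) ^ μ l) ^ (1 / μ l))
            Z (Pi.single j 1))
        Y (Pi.single k 1) ≤ 0 :=
  nested_logit_mixed_second_partial_nonpos_general m L n μ hμ hne
end

section
/- Let G : ℝ^m → ℝ be twice continuously differentiable on the nonnegative orthant, with ∂G/∂Y_j > 0 for all j and ∂²G/(∂Y_j ∂Y_k) ≤ 0 for all j ≠ k, and let Y have positive coordinates. Define ψ(S) = G(x^S ∘ Y) for S ⊆ {1,…,m}. Then ψ has decreasing marginal differences: for all A ⊆ B ⊆ {1,…,m} and j ∉ B, ψ(A ∪ {j}) − ψ(A) ≥ ψ(B ∪ {j}) − ψ(B). -/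
/-! The decreasing-differences property reduces to the exchange inequality for two distinct
coordinates `j ≠ k`. That one follows from the mean value theorem on the convex orthant, used
twice: `∂G/∂Y_k` does not increase along `e_j` because the mixed partial is nonpositive, hence
the increment `z ↦ G (z + Y_j e_j) - G z` does not increase along `e_k`. -/

open Finset

section Calculus

variable {E : Type*} [NormedAddCommGroup E] [NormedSpace ℝ E] {s : Set E}

theorem Convex.apply_add_le_of_hasFDerivWithinAt_apply_nonpos (hs : Convex ℝ s) {f : E → ℝ}
    {f' : E → StrongDual ℝ E} (hf : ∀ x ∈ s, HasFDerivWithinAt f (f' x) s x) {v : E}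
    (hv : ∀ x ∈ s, f' x v ≤ 0) {x : E} (hx : x ∈ s) (hxv : x + v ∈ s) :
    f (x + v) ≤ f x := by
  obtain ⟨z, hz, hfz⟩ := domain_mvt hf hs hx hxv
  rw [add_sub_cancel_left] at hfz
  linarith [hv z (hs.segment_subset hx hxv hz)]

theorem Convex.sub_le_sub_of_hasFDerivWithinAt_mixed_nonpos (hs : Convex ℝ s) {G : E → ℝ}
    {G' : E → StrongDual ℝ E} {G'' : E → StrongDual ℝ E} {a b : E}
    (hG : ∀ x ∈ s, HasFDerivWithinAt G (G' x) s x)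
    (hG' : ∀ x ∈ s, HasFDerivWithinAt (fun y => G' y b) (G'' x) s x)
    (hG'' : ∀ x ∈ s, G'' x a ≤ 0) (hsa : ∀ x ∈ s, x + a ∈ s)
    (hsb : ∀ x ∈ s, x + b ∈ s)
    {u : E} (hu : u ∈ s) :
    G (u + b + a) - G (u + b) ≤ G (u + a) - G u := by
  have hG'_anti : ∀ x ∈ s, G' (x + a) b ≤ G' x b := fun x hx =>
    hs.apply_add_le_of_hasFDerivWithinAt_apply_nonpos hG' hG'' hx (hsa x hx)
  have hincr : ∀ x ∈ s, HasFDerivWithinAt (fun y => G (y + a) - G y) (G' (x + a) - G' x) s x :=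
    fun x hx => ((hG _ (hsa x hx)).comp x ((hasFDerivAt_id x).add_const a).hasFDerivWithinAt
      hsa).sub (hG x hx)
  exact hs.apply_add_le_of_hasFDerivWithinAt_apply_nonpos hincr
    (fun x hx => sub_nonpos.2 (hG'_anti x hx)) hu (hsb u hu)

theorem ContDiffOn.sub_le_sub_of_fderivWithin_mixed_nonpos (hs : Convex ℝ s)
    (hs' : UniqueDiffOn ℝ s) {G : E → ℝ} (hG : ContDiffOn ℝ 2 G s) {a b : E}
    (hmixed : ∀ x ∈ s, fderivWithin ℝ (fun y => fderivWithin ℝ G s y b) s x a ≤ 0)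
    {c d : ℝ} (hc : 0 ≤ c) (hd : 0 ≤ d) (hsa : ∀ x ∈ s, x + c • a ∈ s)
    (hsb : ∀ x ∈ s, x + d • b ∈ s) {u : E} (hu : u ∈ s) :
    G (u + d • b + c • a) - G (u + d • b) ≤ G (u + c • a) - G u := by
  have hGb : DifferentiableOn ℝ (fun y => fderivWithin ℝ G s y b) s :=
    (ContinuousLinearMap.apply ℝ ℝ b).differentiable.comp_differentiableOn
      ((hG.fderivWithin hs' (by norm_num)).differentiableOn one_ne_zero)
  refine hs.sub_le_sub_of_hasFDerivWithinAt_mixed_nonpos (G' := fderivWithin ℝ G s)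
    (G'' := fun x => d • fderivWithin ℝ (fun y => fderivWithin ℝ G s y b) s x)
    (fun x hx => (hG.differentiableOn (by norm_num) x hx).hasFDerivWithinAt)
    (fun x hx => ?_) (fun x hx => ?_) hsa hsb hu
  · simp only [map_smul]
    exact (hGb x hx).hasFDerivWithinAt.const_smul d
  · simp only [smul_apply, map_smul, smul_eq_mul]
    exact mul_nonpos_of_nonneg_of_nonpos hc (mul_nonpos_of_nonneg_of_nonpos hd (hmixed x hx))

end Calculus

section Orthant

variable {ι : Type*}

theorem convex_setOf_forall_nonneg : Convex ℝ {Z : ι → ℝ | ∀ k, 0 ≤ Z k} :=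
  convex_Ici 0

theorem uniqueDiffOn_setOf_forall_nonneg [Finite ι] :
    UniqueDiffOn ℝ {Z : ι → ℝ | ∀ k, 0 ≤ Z k} := by
  have : {Z : ι → ℝ | ∀ k, 0 ≤ Z k} = Set.univ.pi fun _ => Set.Ici 0 := by
    ext; simp [Pi.le_def]
  rw [this]
  exact UniqueDiffOn.univ_pi fun _ => uniqueDiffOn_Ici 0

theorem add_smul_single_mem_setOf_forall_nonneg [DecidableEq ι] {Z : ι → ℝ}
    (hZ : ∀ k, 0 ≤ Z k) {c : ℝ} (hc : 0 ≤ c) (j : ι) :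
    ∀ k, 0 ≤ (Z + c • Pi.single j 1 : ι → ℝ) k := by
  intro k
  rcases eq_or_ne k j with rfl | hkj
  · simpa using add_nonneg (hZ k) hc
  · simpa [hkj] using hZ k

theorem ite_mem_insert_mul_eq_add_smul_single [DecidableEq ι] (Y : ι → ℝ) {S : Finset ι}
    {k : ι} (hk : k ∉ S) :
    (fun i => (if i ∈ insert k S then (1 : ℝ) else 0) * Y i) =
      (fun i => (if i ∈ S then (1 : ℝ) else 0) * Y i) + Y k • Pi.single k 1 := by
  ext i
  rcases eq_or_ne i k with rfl | hik <;> simp [*]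

end Orthant

theorem Finset.insert_sub_le_insert_sub_of_subset {α β : Type*} [DecidableEq α] [Sub β]
    [Preorder β] {ψ : Finset α → β}
    (h : ∀ S j k, j ∉ S → k ∉ S → j ≠ k →
      ψ (insert j (insert k S)) - ψ (insert k S) ≤ ψ (insert j S) - ψ S)
    {A B : Finset α} (hAB : A ⊆ B) {j : α} (hjB : j ∉ B) :
    ψ (insert j B) - ψ B ≤ ψ (insert j A) - ψ A := by
  rw [← union_sdiff_of_subset hAB] at hjB ⊢
  refine Finset.induction_on' (motive := fun D => j ∉ A ∪ D →
    ψ (insert j (A ∪ D)) - ψ (A ∪ D) ≤ ψ (insert j A) - ψ A) (B \ A) (by simp)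
    (fun k D hk _ hkD ih hj => ?_) hjB
  rw [union_insert] at hj ⊢
  obtain ⟨hjk, hjAD⟩ := not_or.1 (mem_insert.not.1 hj)
  have hkAD : k ∉ A ∪ D := by simp_all
  exact (h _ j k hjAD hkAD hjk).trans (ih hjAD)

theorem gev_indicator_decreasing_differences_general (m : ℕ) (G : (Fin m → ℝ) → ℝ)
    (hdiff : ContDiffOn ℝ 2 G {Z : Fin m → ℝ | ∀ k, 0 ≤ Z k})
    (hGmixed : ∀ Z : Fin m → ℝ, (∀ k, 0 ≤ Z k) → ∀ j k : Fin m, j ≠ k →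
      fderivWithin ℝ
        (fun W => fderivWithin ℝ G {V : Fin m → ℝ | ∀ k', 0 ≤ V k'} W (Pi.single j 1))
        {V : Fin m → ℝ | ∀ k', 0 ≤ V k'} Z (Pi.single k 1) ≤ 0)
    (Y : Fin m → ℝ) (hY : ∀ k, 0 < Y k)
    (ψ : Finset (Fin m) → ℝ)
    (hψ : ∀ S : Finset (Fin m),
      ψ S = G (fun j => (if j ∈ S then (1 : ℝ) else 0) * Y j)) :
    ∀ (A B : Finset (Fin m)), A ⊆ B → ∀ j : Fin m, j ∉ B →
      ψ (insert j B) - ψ B ≤ ψ (insert j A) - ψ A := by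
  intro A B hAB j hjB
  refine Finset.insert_sub_le_insert_sub_of_subset (fun S j k hjS hkS hjk => ?_) hAB hjB
  have hjkS : j ∉ insert k S := by simp [hjk, hjS]
  simp only [hψ, ite_mem_insert_mul_eq_add_smul_single Y hjkS,
    ite_mem_insert_mul_eq_add_smul_single Y hkS, ite_mem_insert_mul_eq_add_smul_single Y hjS]
  have hS : ∀ i, 0 ≤ (if i ∈ S then (1 : ℝ) else 0) * Y i := fun i => by
    split_ifs <;> simp [(hY i).le]
  exact hdiff.sub_le_sub_of_fderivWithin_mixed_nonpos convex_setOf_forall_nonneg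
    uniqueDiffOn_setOf_forall_nonneg (fun x hx => hGmixed x hx k j (Ne.symm hjk)) (hY j).le
    (hY k).le (fun x hx => add_smul_single_mem_setOf_forall_nonneg hx (hY j).le j)
    (fun x hx => add_smul_single_mem_setOf_forall_nonneg hx (hY k).le k) hS

/-- Decreasing marginal differences for `ψ(S) = G(x^S ∘ Y)` when `G` has
positive first partials and nonpositive mixed second partials on the
nonnegative orthant. -/
theorem gev_indicator_decreasing_differences (m : ℕ) (G : (Fin m → ℝ) → ℝ)
    (hdiff : ContDiffOn ℝ 2 G {Z : Fin m → ℝ | ∀ k, 0 ≤ Z k})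
    (hGpos : ∀ Z : Fin m → ℝ, (∀ k, 0 ≤ Z k) → ∀ k : Fin m,
      0 < fderivWithin ℝ G {W : Fin m → ℝ | ∀ k', 0 ≤ W k'} Z (Pi.single k 1))
    (hGmixed : ∀ Z : Fin m → ℝ, (∀ k, 0 ≤ Z k) → ∀ j k : Fin m, j ≠ k →
      fderivWithin ℝ
        (fun W => fderivWithin ℝ G {V : Fin m → ℝ | ∀ k', 0 ≤ V k'} W (Pi.single j 1))
        {V : Fin m → ℝ | ∀ k', 0 ≤ V k'} Z (Pi.single k 1) ≤ 0)
    (Y : Fin m → ℝ) (hY : ∀ k, 0 < Y k)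
    (ψ : Finset (Fin m) → ℝ)
    (hψ : ∀ S : Finset (Fin m),
      ψ S = G (fun j => (if j ∈ S then (1 : ℝ) else 0) * Y j)) :
    ∀ (A B : Finset (Fin m)), A ⊆ B → ∀ j : Fin m, j ∉ B →
      ψ (insert j B) - ψ B ≤ ψ (insert j A) - ψ A :=
  gev_indicator_decreasing_differences_general m G hdiff hGmixed Y hY ψ hψ
end

section
/- (Submodularity of the GEV maximum capture objective) Under the assumptions that each G^i : ℝ^m → ℝ is twice continuously differentiable on the nonnegative orthant, nonnegative, with strictly positive first partial derivatives and nonpositive mixed second partial derivatives, q_i > 0, and Y^i has positive coordinates, the set function f(S) = ∑_{i∈I} q_i − ∑_{i∈I} q_i/(1 + G^i(x^S ∘ Y^i)) is submodular: f(A ∪ {j}) − f(A) ≥ f(B ∪ {j}) − f(B) for all A ⊆ B ⊆ {1,…,m} and j ∉ B. -/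
/-! By the mean value theorem each `G i` is monotone on the orthant, and, applied once more to
the increment `W ↦ G i (W + u) - G i W`, nonpositive mixed partials make increments along `u`
shrink when one moves along directions whose support is disjoint from that of `u`. Along the
indicator vectors `x^S ∘ Y^i` this says that `S ↦ G i (x^S ∘ Y^i)` is a monotone set function
with diminishing returns. Since `t ↦ q - q / (1 + t)` is increasing and concave on `[0, ∞)`,
composing with it keeps diminishing returns, and so does summing over `i`. -/

section MeanValue

variable {E : Type*} [NormedAddCommGroup E] [NormedSpace ℝ E] {s : Set E} {F : E → ℝ}
  {F' : E → StrongDual ℝ E} {x v : E}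

theorem Convex.le_apply_add_of_hasFDerivWithinAt_nonneg (hs : Convex ℝ s)
    (hF : ∀ w ∈ s, HasFDerivWithinAt F (F' w) s w) (hx : x ∈ s) (hxv : x + v ∈ s)
    (hF' : ∀ w ∈ s, 0 ≤ F' w v) : F x ≤ F (x + v) := by
  obtain ⟨w, hw, h⟩ := domain_mvt hF hs hx hxv
  rw [add_sub_cancel_left] at h
  linarith [hF' w (hs.segment_subset hx hxv hw)]

theorem Convex.apply_add_le_of_hasFDerivWithinAt_nonpos (hs : Convex ℝ s)
    (hF : ∀ w ∈ s, HasFDerivWithinAt F (F' w) s w) (hx : x ∈ s) (hxv : x + v ∈ s)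
    (hF' : ∀ w ∈ s, F' w v ≤ 0) : F (x + v) ≤ F x :=
  neg_le_neg_iff.1 <| hs.le_apply_add_of_hasFDerivWithinAt_nonneg
    (fun w hw => (hF w hw).neg) hx hxv (fun w hw => neg_nonneg.2 (hF' w hw))

end MeanValue

theorem uniqueDiffOn_Ici_pi {ι : Type*} (a : ι → ℝ) : UniqueDiffOn ℝ (Set.Ici a) := by
  rw [← Set.pi_univ_Ici]
  exact UniqueDiffOn.univ_pi fun i => uniqueDiffOn_Ici (a i)

def MixedPartialsNonpos {ι : Type*} [DecidableEq ι] (g : (ι → ℝ) → ℝ) (s : Set (ι → ℝ)) : Prop :=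
  ∀ Z ∈ s, ∀ j k, j ≠ k →
    fderivWithin ℝ (fun W => fderivWithin ℝ g s W (Pi.single j 1)) s Z (Pi.single k 1) ≤ 0

section Orthant

variable {ι : Type*} [Fintype ι] [DecidableEq ι]

theorem ContinuousLinearMap.apply_eq_sum_mul_apply_single (L : StrongDual ℝ (ι → ℝ))
    (v : ι → ℝ) : L v = ∑ k, v k * L (Pi.single k 1) := by
  conv_lhs => rw [pi_eq_sum_univ' v]
  simp only [map_sum, map_smul, smul_eq_mul]

variable {g : (ι → ℝ) → ℝ}

theorem monotoneOn_Ici_zero_of_partials_nonneg (hg : DifferentiableOn ℝ g (Set.Ici 0))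
    (hpos : ∀ Z ∈ Set.Ici 0, ∀ k, 0 ≤ fderivWithin ℝ g (Set.Ici 0) Z (Pi.single k 1)) :
    MonotoneOn g (Set.Ici 0) := by
  intro x hx y hy hxy
  have hv : (0 : ι → ℝ) ≤ y - x := sub_nonneg.2 hxy
  simpa using (convex_Ici 0).le_apply_add_of_hasFDerivWithinAt_nonneg (v := y - x)
    (fun w hw => (hg w hw).hasFDerivWithinAt) hx (by simpa using hy) fun w hw => by
      rw [ContinuousLinearMap.apply_eq_sum_mul_apply_single]
      exact Finset.sum_nonneg fun k _ => mul_nonneg (hv k) (hpos w hw k)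

theorem fderivWithin_apply_single_add_le (hg : ContDiffOn ℝ 2 g (Set.Ici 0))
    (hmixed : MixedPartialsNonpos g (Set.Ici 0)) {W u : ι → ℝ} (hW : 0 ≤ W) (hu : 0 ≤ u)
    {k : ι} (huk : u k = 0) :
    fderivWithin ℝ g (Set.Ici 0) (W + u) (Pi.single k 1) ≤
      fderivWithin ℝ g (Set.Ici 0) W (Pi.single k 1) := by
  have hdiff : DifferentiableOn ℝ (fun W => fderivWithin ℝ g (Set.Ici 0) W (Pi.single k 1))
      (Set.Ici 0) :=
    ((hg.fderivWithin (m := 1) (uniqueDiffOn_Ici_pi 0) (by norm_num)).differentiableOn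
      (by norm_num)).clm_apply (differentiableOn_const _)
  refine (convex_Ici 0).apply_add_le_of_hasFDerivWithinAt_nonpos
    (fun w hw => (hdiff w hw).hasFDerivWithinAt) hW (add_nonneg hW hu) fun w hw => ?_
  rw [ContinuousLinearMap.apply_eq_sum_mul_apply_single]
  refine Finset.sum_nonpos fun l _ => ?_
  rcases eq_or_ne l k with rfl | hlk
  · simp [huk]
  · exact mul_nonpos_of_nonneg_of_nonpos (hu l) (hmixed w hw k l hlk.symm)

theorem apply_add_add_sub_le_of_mixedPartialsNonpos (hg : ContDiffOn ℝ 2 g (Set.Ici 0))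
    (hmixed : MixedPartialsNonpos g (Set.Ici 0)) {Z u v : ι → ℝ} (hZ : 0 ≤ Z) (hu : 0 ≤ u)
    (hv : 0 ≤ v) (huv : ∀ k, u k = 0 ∨ v k = 0) :
    g (Z + v + u) - g (Z + v) ≤ g (Z + u) - g Z := by
  have hg' : DifferentiableOn ℝ g (Set.Ici 0) := hg.differentiableOn (by norm_num)
  have hincr : ∀ w ∈ Set.Ici (0 : ι → ℝ), HasFDerivWithinAt (fun W => g (W + u) - g W)
      (fderivWithin ℝ g (Set.Ici 0) (w + u) - fderivWithin ℝ g (Set.Ici 0) w) (Set.Ici 0) w :=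
    fun w hw =>
      ((hg' (w + u) (add_nonneg hw hu)).hasFDerivWithinAt.comp w
        ((hasFDerivWithinAt_id w _).add_const u) fun W hW => add_nonneg hW hu).sub
        (hg' w hw).hasFDerivWithinAt
  refine (convex_Ici 0).apply_add_le_of_hasFDerivWithinAt_nonpos hincr hZ (add_nonneg hZ hv)
    fun w hw => ?_
  rw [ContinuousLinearMap.apply_eq_sum_mul_apply_single]
  refine Finset.sum_nonpos fun k _ => ?_
  rcases huv k with huk | hvk
  · exact mul_nonpos_of_nonneg_of_nonpos (hv k)
      (sub_nonpos.2 (fderivWithin_apply_single_add_le hg hmixed hw hu huk))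
  · simp [hvk]

end Orthant

section SetFunction

variable {α : Type*} [DecidableEq α]

/-- For set functions on finsets this is equivalent to submodularity. -/
def DiminishingReturns (F : Finset α → ℝ) : Prop :=
  ∀ ⦃A B : Finset α⦄, A ⊆ B → ∀ ⦃j : α⦄, j ∉ B →
    F (insert j B) - F B ≤ F (insert j A) - F A

theorem DiminishingReturns.sum {κ : Type*} (t : Finset κ) {F : κ → Finset α → ℝ}
    (hF : ∀ i ∈ t, DiminishingReturns (F i)) : DiminishingReturns fun S => ∑ i ∈ t, F i S :=
  fun _ _ hAB _ hjB => by
    simp only [← Finset.sum_sub_distrib]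
    exact Finset.sum_le_sum fun i hi => hF i hi hAB hjB

theorem div_one_add_sub_div_one_add_le {c a b a' b' : ℝ} (hc : 0 ≤ c) (ha : 0 ≤ a)
    (hab : a ≤ b) (haa' : a ≤ a') (ha'b' : a' ≤ b') (hinc : b' - b ≤ a' - a) :
    c / (1 + b) - c / (1 + b') ≤ c / (1 + a) - c / (1 + a') := by
  have h1a : 0 < 1 + a := by linarith
  have h1a' : 0 < 1 + a' := by linarith
  have h1b : 0 < 1 + b := by linarith
  have h1b' : 0 < 1 + b' := by linarith
  calc c / (1 + b) - c / (1 + b') = c * (b' - b) / ((1 + b) * (1 + b')) := by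
        field_simp; ring
    _ ≤ c * (a' - a) / ((1 + b) * (1 + b')) := by gcongr
    _ ≤ c * (a' - a) / ((1 + a) * (1 + a')) := by gcongr
    _ = c / (1 + a) - c / (1 + a') := by field_simp; ring

theorem DiminishingReturns.const_sub_div_one_add {F : Finset α → ℝ} (hF : DiminishingReturns F)
    (hmono : Monotone F) (hnonneg : ∀ S, 0 ≤ F S) {c : ℝ} (hc : 0 ≤ c) :
    DiminishingReturns fun S => c - c / (1 + F S) := fun A B hAB j hjB => by
  have key := div_one_add_sub_div_one_add_le hc (hnonneg A) (hmono hAB)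
    (hmono (Finset.subset_insert j A)) (hmono (Finset.insert_subset_insert j hAB)) (hF hAB hjB)
  linarith

end SetFunction

section Indicator

variable {ι : Type*} {y : ι → ℝ}

theorem Finset.indicator_union_of_disjoint [DecidableEq ι] {S T : Finset ι} (h : Disjoint S T) :
    (↑(S ∪ T) : Set ι).indicator y = (S : Set ι).indicator y + (T : Set ι).indicator y := by
  rw [Finset.coe_union]
  exact Set.indicator_union_of_disjoint (Finset.disjoint_coe.2 h) y

theorem Finset.indicator_eq_zero_or_of_disjoint {S T : Finset ι} (h : Disjoint S T) (k : ι) :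
    (S : Set ι).indicator y k = 0 ∨ (T : Set ι).indicator y k = 0 := by
  by_cases hk : k ∈ S
  · exact Or.inr (Set.indicator_of_notMem (Finset.disjoint_left.1 h hk) y)
  · exact Or.inl (Set.indicator_of_notMem hk y)

variable {g : (ι → ℝ) → ℝ}

theorem MonotoneOn.monotone_comp_indicator (hg : MonotoneOn g (Set.Ici 0)) (hy : 0 ≤ y) :
    Monotone fun S : Finset ι => g ((S : Set ι).indicator y) :=
  fun _ _ hST => hg (Set.indicator_nonneg fun k _ => hy k) (Set.indicator_nonneg fun k _ => hy k)
    (Set.indicator_le_indicator_of_subset (Finset.coe_subset.2 hST) hy)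

theorem diminishingReturns_comp_indicator [Fintype ι] [DecidableEq ι]
    (hg : ContDiffOn ℝ 2 g (Set.Ici 0)) (hmixed : MixedPartialsNonpos g (Set.Ici 0))
    (hy : 0 ≤ y) : DiminishingReturns fun S : Finset ι => g ((S : Set ι).indicator y) := by
  intro A B hAB j hjB
  have hBj : Disjoint B {j} := Finset.disjoint_singleton_right.2 hjB
  have hnonneg : ∀ S : Finset ι, 0 ≤ (S : Set ι).indicator y :=
    fun S => Set.indicator_nonneg fun k _ => hy k
  have hind_insert : ∀ S : Finset ι, Disjoint S {j} → (↑(insert j S) : Set ι).indicator y =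
      (S : Set ι).indicator y + (↑({j} : Finset ι) : Set ι).indicator y :=
    fun S hS => by rw [← Finset.union_singleton, Finset.indicator_union_of_disjoint hS]
  have hind_B :
      (B : Set ι).indicator y = (A : Set ι).indicator y + (↑(B \ A) : Set ι).indicator y := by
    rw [← Finset.indicator_union_of_disjoint Finset.disjoint_sdiff,
      Finset.union_sdiff_of_subset hAB]
  beta_reduce
  rw [hind_insert B hBj, hind_insert A (hBj.mono_left hAB), hind_B]
  exact apply_add_add_sub_le_of_mixedPartialsNonpos hg hmixed (hnonneg _) (hnonneg _) (hnonneg _)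
    (Finset.indicator_eq_zero_or_of_disjoint (hBj.mono_left Finset.sdiff_subset).symm)

end Indicator

/-- Submodularity of the GEV maximum capture objective. -/
theorem gev_mcp_submodular (m : ℕ) (I : Type*) [Fintype I]
    (G : I → (Fin m → ℝ) → ℝ) (q : I → ℝ) (Y : I → Fin m → ℝ)
    (hq : ∀ i, 0 < q i) (hY : ∀ i j, 0 < Y i j)
    (hdiff : ∀ i, ContDiffOn ℝ 2 (G i) {Z : Fin m → ℝ | ∀ k, 0 ≤ Z k})
    (hGnonneg : ∀ i, ∀ Z : Fin m → ℝ, (∀ k, 0 ≤ Z k) → 0 ≤ G i Z)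
    (hGpos : ∀ i, ∀ Z : Fin m → ℝ, (∀ k, 0 ≤ Z k) → ∀ k : Fin m,
      0 < fderivWithin ℝ (G i) {W : Fin m → ℝ | ∀ k', 0 ≤ W k'} Z (Pi.single k 1))
    (hGmixed : ∀ i, ∀ Z : Fin m → ℝ, (∀ k, 0 ≤ Z k) → ∀ j k : Fin m, j ≠ k →
      fderivWithin ℝ
        (fun W => fderivWithin ℝ (G i) {V : Fin m → ℝ | ∀ k', 0 ≤ V k'} W
          (Pi.single j 1))
        {V : Fin m → ℝ | ∀ k', 0 ≤ V k'} Z (Pi.single k 1) ≤ 0)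
    (f : Finset (Fin m) → ℝ)
    (hf : ∀ S : Finset (Fin m),
      f S = ∑ i : I, q i -
        ∑ i : I, q i / (1 + G i (fun j => (if j ∈ S then (1 : ℝ) else 0) * Y i j))) :
    ∀ (A B : Finset (Fin m)), A ⊆ B → ∀ j : Fin m, j ∉ B →
      f (insert j B) - f B ≤ f (insert j A) - f A := by
  have hY₀ : ∀ i, 0 ≤ Y i := fun i k => (hY i k).le
  have hmono : ∀ i,
      Monotone fun S : Finset (Fin m) => G i ((S : Set (Fin m)).indicator (Y i)) :=
    fun i => (monotoneOn_Ici_zero_of_partials_nonneg ((hdiff i).differentiableOn (by norm_num))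
      fun Z hZ k => (hGpos i Z hZ k).le).monotone_comp_indicator (hY₀ i)
  have hterm : ∀ i, DiminishingReturns fun S : Finset (Fin m) =>
      q i - q i / (1 + G i ((S : Set (Fin m)).indicator (Y i))) :=
    fun i => DiminishingReturns.const_sub_div_one_add
      (diminishingReturns_comp_indicator (hdiff i) (hGmixed i) (hY₀ i)) (hmono i)
      (fun S => hGnonneg i _ (Set.indicator_nonneg fun k _ => hY₀ i k)) (hq i).le
  have hf : f = fun S : Finset (Fin m) =>
      ∑ i, (q i - q i / (1 + G i ((S : Set (Fin m)).indicator (Y i)))) := by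
    have hind : ∀ i (S : Finset (Fin m)),
        (fun j => (if j ∈ S then (1 : ℝ) else 0) * Y i j) = (S : Set (Fin m)).indicator (Y i) :=
      fun i S => funext fun k => by simp [Set.indicator_apply]
    funext S
    simp only [hf, hind, Finset.sum_sub_distrib]
  intro A B hAB j hjB
  rw [hf]
  exact DiminishingReturns.sum Finset.univ (fun i _ => hterm i) hAB hjB
end

section
/- If g : ℝ → ℝ is a set-induced function of the form g(S) = c/(1 + ψ(S)) where c > 0 and ψ is a nonnegative, monotone increasing set function with decreasing marginal differences (i.e., ψ(A∪{j}) − ψ(A) ≥ ψ(B∪{j}) − ψ(B) for A ⊆ B, j ∉ B), then the set function S ↦ −g(S) is submodular. -/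
/-- If `ψ` is a nonnegative, monotone increasing set function with decreasing
marginal differences and `c > 0`, then `S ↦ -(c / (1 + ψ S))` is submodular. -/
theorem neg_inverse_submodular (m : ℕ) (ψ : Finset (Fin m) → ℝ) (c : ℝ)
    (hc : 0 < c)
    (hnonneg : ∀ S, 0 ≤ ψ S)
    (hmono : ∀ S T : Finset (Fin m), S ⊆ T → ψ S ≤ ψ T)
    (hdd : ∀ (A B : Finset (Fin m)), A ⊆ B → ∀ j : Fin m, j ∉ B →
      ψ (insert j B) - ψ B ≤ ψ (insert j A) - ψ A) :
    ∀ (A B : Finset (Fin m)), A ⊆ B → ∀ j : Fin m, j ∉ B →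
      (-(c / (1 + ψ (insert j B)))) - (-(c / (1 + ψ B))) ≤
        (-(c / (1 + ψ (insert j A)))) - (-(c / (1 + ψ A))) := by
  intro A B hAB j hjB
  set a := ψ A
  set a' := ψ (insert j A)
  set b := ψ B
  set b' := ψ (insert j B)
  have ha : (0:ℝ) < 1 + a := by linarith [hnonneg A]
  have ha' : (0:ℝ) < 1 + a' := by linarith [hnonneg (insert j A)]
  have hb : (0:ℝ) < 1 + b := by linarith [hnonneg B]
  have hb' : (0:ℝ) < 1 + b' := by linarith [hnonneg (insert j B)]
  have hd : b' - b ≤ a' - a := hdd A B hAB j hjB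
  have hbb' : b ≤ b' := hmono B (insert j B) (Finset.subset_insert _ _)
  have hab : a ≤ b := hmono A B hAB
  have hab' : a' ≤ b' := hmono (insert j A) (insert j B) (Finset.insert_subset_insert _ hAB)
  have key : c * (b' - b) * ((1 + a) * (1 + a')) ≤ c * (a' - a) * ((1 + b) * (1 + b')) := by
    have h1 : (1 + a) * (1 + a') ≤ (1 + b) * (1 + b') := by nlinarith
    have h2 : c * (b' - b) ≤ c * (a' - a) :=
      mul_le_mul_of_nonneg_left hd hc.le
    exact mul_le_mul h2 h1 (by positivity) (by nlinarith)
  have lhs : -(c / (1 + b')) - -(c / (1 + b)) = c * (b' - b) / ((1 + b) * (1 + b')) := by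
    field_simp; ring
  have rhs : -(c / (1 + a')) - -(c / (1 + a)) = c * (a' - a) / ((1 + a) * (1 + a')) := by
    field_simp; ring
  rw [lhs, rhs, div_le_div_iff₀ (by positivity) (by positivity)]
  nlinarith [key]
end

section
/- (Optimality of the exchange algorithm for the local-search subproblem) Let d ∈ ℝ^m with d_j ≥ 0, let S̄ ⊆ {1,…,m} with |S̄| = C, and let Δ be a nonnegative even integer with Δ/2 ≤ min(C, m − C). Let σ¹_1,…,σ¹_{Δ/2} be indices of the Δ/2 smallest values of d within S̄ (sorted increasingly) and σ²_1,…,σ²_{Δ/2} the indices of the Δ/2 largest values of d within the complement of S̄ (sorted decreasingly). For t = 1,…,Δ/2 set γ(t) = ∑_{h=1}^t (d_{σ²_h} − d_{σ¹_h}), let t* maximize γ(t) over t ∈ {0,1,…,Δ/2} (with γ(0)=0), and let S* = (S̄ ∪ {σ²_1,…,σ²_{t*}}) \ {σ¹_1,…,σ¹_{t*}}. Then for every S ⊆ {1,…,m} with |S| = C and |S △ S̄| ≤ Δ, it holds that ∑_{j∈S} d_j ≤ ∑_{j∈S*} d_j. -/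
/-!
If `S` gains the `t = |S \ S̄|` elements `S \ S̄` and loses the `t` elements `S̄ \ S`, then
`t ≤ Δ/2` because `|S| = |S̄|`. Any `t` elements outside `S̄` weigh at most the `t` largest ones
`σ²_1, …, σ²_t`, and any `t` elements of `S̄` weigh at least the `t` smallest ones, so
`d(S) ≤ d(S̄) + γ(t) ≤ d(S̄) + γ(t*) = d(S*)`.
-/

open Finset

section Greedy

variable {α β : Type*} [DecidableEq α] {d : α → β} {U : Set α} {k : ℕ} {σ : ℕ → α}

lemma apply_le_apply_of_notMem_image_range [Preorder β]
    (hsorted : ∀ a b, a ≤ b → b < k → d (σ b) ≤ d (σ a))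
    (hmax : ∀ h, h < k → ∀ j, j ∈ U → (∀ h', h' < k → j ≠ σ h') → d j ≤ d (σ h))
    {t : ℕ} (ht : t < k) {j : α} (hjU : j ∈ U) (hj : j ∉ (range t).image σ) :
    d j ≤ d (σ t) := by
  by_cases hσ : ∃ h', h' < k ∧ j = σ h'
  · obtain ⟨h', hh', rfl⟩ := hσ
    have hth' : t ≤ h' := by
      by_contra! hlt
      exact hj (mem_image_of_mem σ (mem_range.mpr hlt))
    exact hsorted t h' hth' hh'
  · exact hmax t ht j hjU fun h' hh' hjh' => hσ ⟨h', hh', hjh'⟩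

variable [AddCommMonoid β] [LinearOrder β] [IsOrderedAddMonoid β]

/-- Peeling off the smallest element of `B`: some element of `B` avoids the first `#B - 1` greedy
picks, so it, and a fortiori the smallest one, is at most the next pick. -/
lemma sum_le_sum_range_of_sorted_of_max
    (hsorted : ∀ a b, a ≤ b → b < k → d (σ b) ≤ d (σ a))
    (hmax : ∀ h, h < k → ∀ j, j ∈ U → (∀ h', h' < k → j ≠ σ h') → d j ≤ d (σ h))
    (B : Finset α) (hBU : ↑B ⊆ U) (hBk : #B ≤ k) :
    ∑ j ∈ B, d j ≤ ∑ h ∈ range #B, d (σ h) := by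
  induction B using Finset.induction_on_min_value d with
  | empty => simp
  | insert a B haB hmin ih =>
    rw [coe_insert, Set.insert_subset_iff] at hBU
    rw [card_insert_of_notMem haB] at hBk ⊢
    obtain ⟨b, hb, hbσ⟩ : ∃ b ∈ insert a B, b ∉ (range #B).image σ :=
      exists_mem_notMem_of_card_lt_card <| card_image_le.trans_lt <| by
        rw [card_range, card_insert_of_notMem haB]; omega
    obtain ⟨hab, hbU⟩ : d a ≤ d b ∧ b ∈ U := by
      rcases mem_insert.mp hb with rfl | hbB
      · exact ⟨le_rfl, hBU.1⟩
      · exact ⟨hmin b hbB, hBU.2 hbB⟩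
    rw [sum_insert haB, sum_range_succ, add_comm]
    exact add_le_add (ih hBU.2 (by omega))
      (hab.trans (apply_le_apply_of_notMem_image_range hsorted hmax (by omega) hbU hbσ))

lemma sum_range_le_sum_of_sorted_of_min
    (hsorted : ∀ a b, a ≤ b → b < k → d (σ a) ≤ d (σ b))
    (hmin : ∀ h, h < k → ∀ j, j ∈ U → (∀ h', h' < k → j ≠ σ h') → d (σ h) ≤ d j)
    (B : Finset α) (hBU : ↑B ⊆ U) (hBk : #B ≤ k) :
    ∑ h ∈ range #B, d (σ h) ≤ ∑ j ∈ B, d j :=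
  sum_le_sum_range_of_sorted_of_max (β := βᵒᵈ) (d := fun j => OrderDual.toDual (d j))
    hsorted hmin B hBU hBk

end Greedy

lemma card_symmDiff_of_card_eq {α : Type*} [DecidableEq α] {s t : Finset α} (h : #s = #t) :
    #(symmDiff s t) = 2 * #(s \ t) := by
  rw [symmDiff_def, sup_eq_union, card_union_of_disjoint disjoint_sdiff_sdiff, ← card_sdiff_comm h]
  ring

lemma sum_exchange {α β : Type*} [DecidableEq α] [AddCommGroup β] (d : α → β) (Sb : Finset α)
    {σ₁ σ₂ : ℕ → α} {t : ℕ} (hσ₁ : ∀ h < t, σ₁ h ∈ Sb) (hσ₂ : ∀ h < t, σ₂ h ∉ Sb)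
    (hσ₁inj : Set.InjOn σ₁ (Set.Iio t)) (hσ₂inj : Set.InjOn σ₂ (Set.Iio t)) :
    ∑ j ∈ (Sb ∪ (range t).image σ₂) \ (range t).image σ₁, d j =
      ∑ j ∈ Sb, d j + ∑ h ∈ range t, (d (σ₂ h) - d (σ₁ h)) := by
  have hsub : (range t).image σ₁ ⊆ Sb ∪ (range t).image σ₂ := fun j hj => by
    obtain ⟨h, hh, rfl⟩ := mem_image.mp hj
    exact mem_union_left _ (hσ₁ h (mem_range.mp hh))
  have hdisj : Disjoint Sb ((range t).image σ₂) := disjoint_right.mpr fun j hj => by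
    obtain ⟨h, hh, rfl⟩ := mem_image.mp hj
    exact hσ₂ h (mem_range.mp hh)
  rw [sum_sdiff_eq_sub hsub, sum_union hdisj, sum_image (by rwa [coe_range]),
    sum_image (by rwa [coe_range]), sum_sub_distrib]
  abel

theorem exchange_algorithm_optimal_general (m : ℕ) (d : Fin m → ℝ)
    (Sb : Finset (Fin m)) (C : ℕ) (hScard : Sb.card = C)
    (k : ℕ)
    (σ1 σ2 : ℕ → Fin m)
    (hσ1inj : ∀ a b, a < k → b < k → σ1 a = σ1 b → a = b)
    (hσ2inj : ∀ a b, a < k → b < k → σ2 a = σ2 b → a = b)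
    (hσ1mem : ∀ h, h < k → σ1 h ∈ Sb)
    (hσ2mem : ∀ h, h < k → σ2 h ∉ Sb)
    (hσ1sorted : ∀ a b, a ≤ b → b < k → d (σ1 a) ≤ d (σ1 b))
    (hσ2sorted : ∀ a b, a ≤ b → b < k → d (σ2 b) ≤ d (σ2 a))
    (hσ1min : ∀ h, h < k → ∀ j ∈ Sb, (∀ h', h' < k → j ≠ σ1 h') →
      d (σ1 h) ≤ d j)
    (hσ2max : ∀ h, h < k → ∀ j, j ∉ Sb → (∀ h', h' < k → j ≠ σ2 h') →
      d j ≤ d (σ2 h))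
    (γ : ℕ → ℝ)
    (hγ : ∀ t, γ t = ∑ h ∈ Finset.range t, (d (σ2 h) - d (σ1 h)))
    (tstar : ℕ) (htstar : tstar ≤ k)
    (hopt : ∀ t, t ≤ k → γ t ≤ γ tstar)
    (Sstar : Finset (Fin m))
    (hSstar : Sstar =
      (Sb ∪ (Finset.range tstar).image σ2) \ (Finset.range tstar).image σ1) :
    ∀ S : Finset (Fin m), S.card = C → (symmDiff S Sb).card ≤ 2 * k →
      ∑ j ∈ S, d j ≤ ∑ j ∈ Sstar, d j := by
  intro S hS hΔ
  have hcard : #S = #Sb := hS.trans hScard.symm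
  have htk : #(S \ Sb) ≤ k := by rw [card_symmDiff_of_card_eq hcard] at hΔ; omega
  have hgain : ∑ j ∈ S \ Sb, d j - ∑ j ∈ Sb \ S, d j ≤ γ #(S \ Sb) := by
    rw [hγ, sum_sub_distrib]
    refine sub_le_sub (sum_le_sum_range_of_sorted_of_max (U := (↑Sb)ᶜ) hσ2sorted hσ2max _
      (by simp) htk) ?_
    rw [card_sdiff_comm hcard]
    exact sum_range_le_sum_of_sorted_of_min (U := ↑Sb) hσ1sorted hσ1min _
      (by simp) (card_sdiff_comm hcard ▸ htk)
  calc ∑ j ∈ S, d j = ∑ j ∈ Sb, d j + (∑ j ∈ S \ Sb, d j - ∑ j ∈ Sb \ S, d j) := by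
        rw [sum_sdiff_sub_sum_sdiff]; abel
    _ ≤ ∑ j ∈ Sb, d j + γ tstar := by grw [hgain, hopt _ htk]
    _ = ∑ j ∈ Sstar, d j := by
      rw [hSstar, hγ, sum_exchange d Sb (fun h hh => hσ1mem h (hh.trans_le htstar))
        (fun h hh => hσ2mem h (hh.trans_le htstar))
        (fun a ha b hb => hσ1inj a b (lt_of_lt_of_le ha htstar) (lt_of_lt_of_le hb htstar))
        (fun a ha b hb => hσ2inj a b (lt_of_lt_of_le ha htstar) (lt_of_lt_of_le hb htstar))]

/-- Optimality of the greedy exchange algorithm for the gradient-based local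
search subproblem: exchanging the `t*` smallest-coefficient elements of `S̄`
with the `t*` largest-coefficient elements outside `S̄` (for the best `t*`)
yields an optimal solution among all sets of cardinality `C` within symmetric
difference `Δ = 2k` of `S̄`. -/
theorem exchange_algorithm_optimal (m : ℕ) (d : Fin m → ℝ)
    (hd : ∀ j, 0 ≤ d j)
    (Sb : Finset (Fin m)) (C : ℕ) (hScard : Sb.card = C)
    (k : ℕ) (hkC : k ≤ C) (hkm : k ≤ m - C)
    (σ1 σ2 : ℕ → Fin m)
    (hσ1inj : ∀ a b, a < k → b < k → σ1 a = σ1 b → a = b)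
    (hσ2inj : ∀ a b, a < k → b < k → σ2 a = σ2 b → a = b)
    (hσ1mem : ∀ h, h < k → σ1 h ∈ Sb)
    (hσ2mem : ∀ h, h < k → σ2 h ∉ Sb)
    (hσ1sorted : ∀ a b, a ≤ b → b < k → d (σ1 a) ≤ d (σ1 b))
    (hσ2sorted : ∀ a b, a ≤ b → b < k → d (σ2 b) ≤ d (σ2 a))
    (hσ1min : ∀ h, h < k → ∀ j ∈ Sb, (∀ h', h' < k → j ≠ σ1 h') →
      d (σ1 h) ≤ d j)
    (hσ2max : ∀ h, h < k → ∀ j, j ∉ Sb → (∀ h', h' < k → j ≠ σ2 h') →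
      d j ≤ d (σ2 h))
    (γ : ℕ → ℝ)
    (hγ : ∀ t, γ t = ∑ h ∈ Finset.range t, (d (σ2 h) - d (σ1 h)))
    (tstar : ℕ) (htstar : tstar ≤ k)
    (hopt : ∀ t, t ≤ k → γ t ≤ γ tstar)
    (Sstar : Finset (Fin m))
    (hSstar : Sstar =
      (Sb ∪ (Finset.range tstar).image σ2) \ (Finset.range tstar).image σ1) :
    ∀ S : Finset (Fin m), S.card = C → (symmDiff S Sb).card ≤ 2 * k →
      ∑ j ∈ S, d j ≤ ∑ j ∈ Sstar, d j :=
  exchange_algorithm_optimal_general m d Sb C hScard k σ1 σ2 hσ1inj hσ2inj hσ1mem hσ2mem hσ1sorted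
    hσ2sorted hσ1min hσ2max γ hγ tstar htstar hopt Sstar hSstar
end
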